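/- Let A be an n×n-matrix-valued smooth 1-form on an open subset of ℝᵐ, and let F = dA + A ∧ A be its curvature 2-form. Then the exterior derivative of the Chern–Simons 3-form satisfies d Tr(A ∧ dA + (2/3) A ∧ A ∧ A) = Tr(F ∧ F). -/

import Mathlib

/- STATEMENT 8: For a smooth n×n-matrix-valued 1-form A on an open subset U of ℝᵐ with
curvature F = dA + A ∧ A, the Chern–Simons 3-form satisfies
d Tr(A ∧ dA + (2/3) A ∧ A ∧ A) = Tr(F ∧ F).
Forms are given by their totally antisymmetric components; ∂ is the partial
derivative (fderivWithin along the μ-th coordinate direction). -/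

attribute [local instance] Matrix.normedAddCommGroup Matrix.normedSpace

/-- Partial derivative in the μ-th coordinate direction, within a set U. -/
noncomputable def pdW {m : ℕ} {F : Type*} [NormedAddCommGroup F] [NormedSpace ℝ F]
    (U : Set (Fin m → ℝ)) (f : (Fin m → ℝ) → F) (μ : Fin m) (x : Fin m → ℝ) : F :=
  fderivWithin ℝ f U x (Pi.single μ 1)

noncomputable abbrev matTop (n : ℕ) : TopologicalSpace (Matrix (Fin n) (Fin n) ℂ) :=
  (Matrix.normedAddCommGroup (α := ℂ)).toUniformSpace.toTopologicalSpace

attribute [local instance high] matTop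

abbrev Mx (n : ℕ) := Matrix (Fin n) (Fin n) ℂ

noncomputable def mulL (n : ℕ) : Mx n →L[ℝ] Mx n →L[ℝ] Mx n :=
  LinearMap.toContinuousLinearMap
    ((LinearMap.toContinuousLinearMap.toLinearMap).comp (LinearMap.mul ℝ (Mx n)))

@[simp] lemma mulL_apply {n : ℕ} (a b : Mx n) : mulL n a b = a * b := by simp [mulL]

noncomputable def traceL (n : ℕ) : Mx n →L[ℝ] ℂ :=
  LinearMap.toContinuousLinearMap ((Matrix.traceLinearMap (Fin n) ℂ ℂ).restrictScalars ℝ)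

@[simp] lemma traceL_apply {n : ℕ} (a : Mx n) : traceL n a = Matrix.trace a := by simp [traceL]

noncomputable def pd {m : ℕ} {F : Type*} [NormedAddCommGroup F] [NormedSpace ℝ F]
    (f : (Fin m → ℝ) → F) (μ : Fin m) (x : Fin m → ℝ) : F :=
  fderiv ℝ f x (Pi.single μ 1)

section calc_lemmas
variable {m n : ℕ} {x : Fin m → ℝ} {f g : (Fin m → ℝ) → Mx n}

@[fun_prop] lemma DifferentiableAt.mmul (hf : DifferentiableAt ℝ f x)
    (hg : DifferentiableAt ℝ g x) : DifferentiableAt ℝ (fun y => f y * g y) x := by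
  have h1 : DifferentiableAt ℝ (fun y => mulL n (f y)) x :=
    ((mulL n).differentiable.differentiableAt).comp x hf
  simpa using h1.clm_apply hg

lemma pd_mmul (hf : DifferentiableAt ℝ f x) (hg : DifferentiableAt ℝ g x) (μ : Fin m) :
    pd (fun y => f y * g y) μ x = pd f μ x * g x + f x * pd g μ x := by
  have h1 : DifferentiableAt ℝ (fun y => mulL n (f y)) x :=
    ((mulL n).differentiable.differentiableAt).comp x hf
  have e1 : fderiv ℝ (fun y => mulL n (f y)) x = (mulL n).comp (fderiv ℝ f x) :=
    ((mulL n).hasFDerivAt.comp x hf.hasFDerivAt).fderiv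
  have h2 := fderiv_clm_apply h1 hg
  have : (fun y => f y * g y) = fun y => (mulL n (f y)) (g y) := by ext y; simp
  rw [pd, this, h2, e1]
  simp [pd, add_comm]

lemma pd_sub (hf : DifferentiableAt ℝ f x) (hg : DifferentiableAt ℝ g x) (μ : Fin m) :
    pd (fun y => f y - g y) μ x = pd f μ x - pd g μ x := by
  rw [pd, fderiv_fun_sub hf hg]; simp [pd]

lemma pd_add (hf : DifferentiableAt ℝ f x) (hg : DifferentiableAt ℝ g x) (μ : Fin m) :
    pd (fun y => f y + g y) μ x = pd f μ x + pd g μ x := by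
  rw [pd, fderiv_fun_add hf hg]; simp [pd]

lemma pd_trace (hf : DifferentiableAt ℝ f x) (μ : Fin m) :
    pd (fun y => Matrix.trace (f y)) μ x = Matrix.trace (pd f μ x) := by
  have h : (fun y => Matrix.trace (f y)) = fun y => traceL n (f y) := by ext y; simp
  have e1 : fderiv ℝ (fun y => traceL n (f y)) x = (traceL n).comp (fderiv ℝ f x) := by
    have := ((traceL n).hasFDerivAt (x := f x)).comp x hf.hasFDerivAt
    exact this.fderiv
  rw [pd, h, e1]
  simp [pd]

lemma pd_smulC (hf : DifferentiableAt ℝ f x) (c : ℂ) (μ : Fin m) :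
    pd (fun y => c • f y) μ x = c • pd f μ x := by
  rw [pd, fderiv_fun_const_smul hf c]; simp [pd]

end calc_lemmas

lemma tr3a {n : ℕ} (a b c : Mx n) :
    Matrix.trace (a * (b * c)) = Matrix.trace (b * (c * a)) := by
  rw [Matrix.trace_mul_comm, mul_assoc]

lemma tr4a {n : ℕ} (a b c d : Mx n) :
    Matrix.trace (a * (b * (c * d))) = Matrix.trace (b * (c * (d * a))) := by
  rw [Matrix.trace_mul_comm, mul_assoc, mul_assoc]

lemma pdW_eq_pd {m : ℕ} {F : Type*} [NormedAddCommGroup F] [NormedSpace ℝ F]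
    {U : Set (Fin m → ℝ)} (hU : IsOpen U) {x : Fin m → ℝ} (hx : x ∈ U)
    (f : (Fin m → ℝ) → F) (μ : Fin m) : pdW U f μ x = pd f μ x := by
  unfold pdW pd
  rw [fderivWithin_of_isOpen hU hx]


set_option maxHeartbeats 2000000 in
theorem dCS_eq_TrFF {m n : ℕ} (U : Set (Fin m → ℝ)) (hU : IsOpen U)
    (A : (Fin m → ℝ) → Fin m → Matrix (Fin n) (Fin n) ℂ)
    (hA : ∀ μ, ContDiffOn ℝ (⊤ : ℕ∞) (fun x => A x μ) U)
    -- dA: the components of the exterior derivative of A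
    (dA : (Fin m → ℝ) → Fin m → Fin m → Matrix (Fin n) (Fin n) ℂ)
    (hdA : ∀ x μ ν, dA x μ ν = pdW U (fun y => A y ν) μ x - pdW U (fun y => A y μ) ν x)
    -- F = dA + A ∧ A: the curvature
    (F : (Fin m → ℝ) → Fin m → Fin m → Matrix (Fin n) (Fin n) ℂ)
    (hF : ∀ x μ ν, F x μ ν = dA x μ ν + A x μ * A x ν - A x ν * A x μ)
    -- c: the components of the Chern–Simons 3-form Tr(A ∧ dA + (2/3) A ∧ A ∧ A)
    (c : (Fin m → ℝ) → Fin m → Fin m → Fin m → ℂ)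
    (hc : ∀ x μ ν ρ, c x μ ν ρ =
      Matrix.trace (A x μ * dA x ν ρ - A x ν * dA x μ ρ + A x ρ * dA x μ ν
        + (2 / 3 : ℂ) • (A x μ * A x ν * A x ρ - A x μ * A x ρ * A x ν
            - A x ν * A x μ * A x ρ + A x ν * A x ρ * A x μ
            + A x ρ * A x μ * A x ν - A x ρ * A x ν * A x μ))) :
    -- d(CS 3-form) = Tr(F ∧ F), in components
    ∀ x ∈ U, ∀ μ ν ρ σ,
      pdW U (fun y => c y ν ρ σ) μ x - pdW U (fun y => c y μ ρ σ) ν x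
        + pdW U (fun y => c y μ ν σ) ρ x - pdW U (fun y => c y μ ν ρ) σ x
      = Matrix.trace (F x μ ν * F x ρ σ - F x μ ρ * F x ν σ + F x μ σ * F x ν ρ
          + F x ρ σ * F x μ ν - F x ν σ * F x μ ρ + F x ν ρ * F x μ σ) := by
  intro x hx μ ν ρ σ
  have hUx : U ∈ nhds x := hU.mem_nhds hx
  have hCA : ∀ δ, ∀ y ∈ U, ContDiffAt ℝ (⊤ : ℕ∞) (fun z => A z δ) y :=
    fun δ y hy => (hA δ).contDiffAt (hU.mem_nhds hy)
  have hdiffA : ∀ δ, ∀ y ∈ U, DifferentiableAt ℝ (fun z => A z δ) y :=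
    fun δ y hy => (hCA δ y hy).differentiableAt (by simp)
  have hdAx : ∀ δ, DifferentiableAt ℝ (fun z => A z δ) x := fun δ => hdiffA δ x hx
  set B : (Fin m → ℝ) → Fin m → Fin m → Mx n :=
    fun y α β => fderiv ℝ (fun z => A z β) y (Pi.single α 1) with hB
  have hfd : ∀ δ, DifferentiableAt ℝ (fderiv ℝ (fun z => A z δ)) x := by
    intro δ
    have h2 : ContDiffAt ℝ 1 (fderiv ℝ (fun z => A z δ)) x := by
      apply (hCA δ x hx).fderiv_right
      exact WithTop.coe_le_coe.mpr le_top
    exact h2.differentiableAt one_ne_zero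
  have hdiffB : ∀ α β, DifferentiableAt ℝ (fun y => B y α β) x := by
    intro α β
    exact (hfd β).clm_apply (differentiableAt_const _)
  set q : Fin m → Fin m → Fin m → Mx n :=
    fun γ α β => fderiv ℝ (fderiv ℝ (fun z => A z β)) x (Pi.single γ 1) (Pi.single α 1) with hq
  have hpdB : ∀ γ α β, pd (fun y => B y α β) γ x = q γ α β := by
    intro γ α β
    have e := fderiv_clm_apply (hfd β) (differentiableAt_const (Pi.single α (1:ℝ)))
    rw [pd, hB]
    simp only []
    rw [e]
    simp [hq]
  have hqsym : ∀ γ α β, q γ α β = q α γ β := by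
    intro γ α β
    apply second_derivative_symmetric_of_eventually (f := fun z => A z β)
    · filter_upwards [hUx] with y hy
      exact (hdiffA β y hy).hasFDerivAt
    · exact (hfd β).hasFDerivAt
  -- dA in terms of B on U
  have hdAB : ∀ y ∈ U, ∀ α β, dA y α β = B y α β - B y β α := by
    intro y hy α β
    rw [hdA, pdW_eq_pd hU hy, pdW_eq_pd hU hy]
    rfl
  -- the key derivative computation
  have key : ∀ δ α β γ, pdW U (fun y => c y α β γ) δ x =
      Matrix.trace (
        (B x δ α * (B x β γ - B x γ β) + A x α * (q δ β γ - q δ γ β))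
        - (B x δ β * (B x α γ - B x γ α) + A x β * (q δ α γ - q δ γ α))
        + (B x δ γ * (B x α β - B x β α) + A x γ * (q δ α β - q δ β α))
        + (2/3 : ℂ) • (
            ((B x δ α * A x β + A x α * B x δ β) * A x γ + A x α * A x β * B x δ γ)
          - ((B x δ α * A x γ + A x α * B x δ γ) * A x β + A x α * A x γ * B x δ β)
          - ((B x δ β * A x α + A x β * B x δ α) * A x γ + A x β * A x α * B x δ γ)
          + ((B x δ β * A x γ + A x β * B x δ γ) * A x α + A x β * A x γ * B x δ α)
          + ((B x δ γ * A x α + A x γ * B x δ α) * A x β + A x γ * A x α * B x δ β)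
          - ((B x δ γ * A x β + A x γ * B x δ β) * A x α + A x γ * A x β * B x δ α))) := by
    intro δ α β γ
    rw [pdW_eq_pd hU hx]
    have hev : (fun y => c y α β γ) =ᶠ[nhds x] (fun y =>
        Matrix.trace (A y α * (B y β γ - B y γ β) - A y β * (B y α γ - B y γ α)
          + A y γ * (B y α β - B y β α)
          + (2 / 3 : ℂ) • (A y α * A y β * A y γ - A y α * A y γ * A y β
              - A y β * A y α * A y γ + A y β * A y γ * A y α
              + A y γ * A y α * A y β - A y γ * A y β * A y α))) := by
      filter_upwards [hUx] with y hy
      rw [hc, hdAB y hy, hdAB y hy, hdAB y hy]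
    have hpde : pd (fun y => c y α β γ) δ x = pd (fun y =>
        Matrix.trace (A y α * (B y β γ - B y γ β) - A y β * (B y α γ - B y γ α)
          + A y γ * (B y α β - B y β α)
          + (2 / 3 : ℂ) • (A y α * A y β * A y γ - A y α * A y γ * A y β
              - A y β * A y α * A y γ + A y β * A y γ * A y α
              + A y γ * A y α * A y β - A y γ * A y β * A y α))) δ x := by
      unfold pd
      rw [hev.fderiv_eq]
    rw [hpde]
    -- differentiability of all atoms near x
    have hA' : ∀ ε, DifferentiableAt ℝ (fun y => A y ε) x := hdAx
    have hB' : ∀ ε φ, DifferentiableAt ℝ (fun y => B y ε φ) x := hdiffB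
    have hpA : ∀ ε φ, pd (fun y => A y φ) ε x = B x ε φ := fun _ _ => rfl
    simp (disch := fun_prop) only [pd_trace, pd_add, pd_sub, pd_mmul, pd_smulC, hpA, hpdB]
  rw [key, key, key, key, hF, hF, hF, hF, hF, hF,
    hdAB x hx, hdAB x hx, hdAB x hx, hdAB x hx, hdAB x hx, hdAB x hx]
  simp only [smul_sub, smul_add, mul_sub, sub_mul, mul_add, add_mul, mul_assoc,
    Matrix.trace_sub, Matrix.trace_add, Matrix.trace_smul, smul_eq_mul]
  linear_combination
      congrArg (fun X => Matrix.trace (A x ρ * X)) (hqsym ν μ σ)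
      - congrArg (fun X => Matrix.trace (A x σ * X)) (hqsym ν μ ρ)
      + congrArg (fun X => Matrix.trace (A x μ * X)) (hqsym ρ ν σ)
      - congrArg (fun X => Matrix.trace (A x ν * X)) (hqsym ρ μ σ)
      + congrArg (fun X => Matrix.trace (A x σ * X)) (hqsym ρ μ ν)
      - congrArg (fun X => Matrix.trace (A x σ * X)) (hqsym ρ ν μ)
      - congrArg (fun X => Matrix.trace (A x μ * X)) (hqsym σ ν ρ)
      + congrArg (fun X => Matrix.trace (A x μ * X)) (hqsym σ ρ ν)
      + congrArg (fun X => Matrix.trace (A x ν * X)) (hqsym σ μ ρ)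
      - congrArg (fun X => Matrix.trace (A x ν * X)) (hqsym σ ρ μ)
      - congrArg (fun X => Matrix.trace (A x ρ * X)) (hqsym σ μ ν)
      + congrArg (fun X => Matrix.trace (A x ρ * X)) (hqsym σ ν μ)
      + (2/3 : ℂ) * (tr3a (A x ν) (B x μ ρ) (A x σ))
      - (1/3 : ℂ) * ((tr3a (A x ν) (A x ρ) (B x μ σ)).trans (tr3a (A x ρ) (B x μ σ) (A x ν)))
      - (2/3 : ℂ) * (tr3a (A x ν) (B x μ σ) (A x ρ))
      + (1/3 : ℂ) * ((tr3a (A x ν) (A x σ) (B x μ ρ)).trans (tr3a (A x σ) (B x μ ρ) (A x ν)))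
      - (2/3 : ℂ) * (tr3a (A x ρ) (B x μ ν) (A x σ))
      + (1/3 : ℂ) * ((tr3a (A x ρ) (A x ν) (B x μ σ)).trans (tr3a (A x ν) (B x μ σ) (A x ρ)))
      + (2/3 : ℂ) * (tr3a (A x ρ) (B x μ σ) (A x ν))
      - (1/3 : ℂ) * ((tr3a (A x ρ) (A x σ) (B x μ ν)).trans (tr3a (A x σ) (B x μ ν) (A x ρ)))
      + (2/3 : ℂ) * (tr3a (A x σ) (B x μ ν) (A x ρ))
      - (1/3 : ℂ) * ((tr3a (A x σ) (A x ν) (B x μ ρ)).trans (tr3a (A x ν) (B x μ ρ) (A x σ)))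
      - (2/3 : ℂ) * (tr3a (A x σ) (B x μ ρ) (A x ν))
      + (1/3 : ℂ) * ((tr3a (A x σ) (A x ρ) (B x μ ν)).trans (tr3a (A x ρ) (B x μ ν) (A x σ)))
      - (2/3 : ℂ) * (tr3a (A x μ) (B x ν ρ) (A x σ))
      + (1/3 : ℂ) * ((tr3a (A x μ) (A x ρ) (B x ν σ)).trans (tr3a (A x ρ) (B x ν σ) (A x μ)))
      + (2/3 : ℂ) * (tr3a (A x μ) (B x ν σ) (A x ρ))
      - (1/3 : ℂ) * ((tr3a (A x μ) (A x σ) (B x ν ρ)).trans (tr3a (A x σ) (B x ν ρ) (A x μ)))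
      + (2/3 : ℂ) * (tr3a (A x ρ) (B x ν μ) (A x σ))
      - (1/3 : ℂ) * ((tr3a (A x ρ) (A x μ) (B x ν σ)).trans (tr3a (A x μ) (B x ν σ) (A x ρ)))
      - (2/3 : ℂ) * (tr3a (A x ρ) (B x ν σ) (A x μ))
      + (1/3 : ℂ) * ((tr3a (A x ρ) (A x σ) (B x ν μ)).trans (tr3a (A x σ) (B x ν μ) (A x ρ)))
      - (2/3 : ℂ) * (tr3a (A x σ) (B x ν μ) (A x ρ))
      + (1/3 : ℂ) * ((tr3a (A x σ) (A x μ) (B x ν ρ)).trans (tr3a (A x μ) (B x ν ρ) (A x σ)))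
      + (2/3 : ℂ) * (tr3a (A x σ) (B x ν ρ) (A x μ))
      - (1/3 : ℂ) * ((tr3a (A x σ) (A x ρ) (B x ν μ)).trans (tr3a (A x ρ) (B x ν μ) (A x σ)))
      + (2/3 : ℂ) * (tr3a (A x μ) (B x ρ ν) (A x σ))
      - (1/3 : ℂ) * ((tr3a (A x μ) (A x ν) (B x ρ σ)).trans (tr3a (A x ν) (B x ρ σ) (A x μ)))
      - (2/3 : ℂ) * (tr3a (A x μ) (B x ρ σ) (A x ν))
      + (1/3 : ℂ) * ((tr3a (A x μ) (A x σ) (B x ρ ν)).trans (tr3a (A x σ) (B x ρ ν) (A x μ)))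
      - (2/3 : ℂ) * (tr3a (A x ν) (B x ρ μ) (A x σ))
      + (1/3 : ℂ) * ((tr3a (A x ν) (A x μ) (B x ρ σ)).trans (tr3a (A x μ) (B x ρ σ) (A x ν)))
      + (2/3 : ℂ) * (tr3a (A x ν) (B x ρ σ) (A x μ))
      - (1/3 : ℂ) * ((tr3a (A x ν) (A x σ) (B x ρ μ)).trans (tr3a (A x σ) (B x ρ μ) (A x ν)))
      + (2/3 : ℂ) * (tr3a (A x σ) (B x ρ μ) (A x ν))
      - (1/3 : ℂ) * ((tr3a (A x σ) (A x μ) (B x ρ ν)).trans (tr3a (A x μ) (B x ρ ν) (A x σ)))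
      - (2/3 : ℂ) * (tr3a (A x σ) (B x ρ ν) (A x μ))
      + (1/3 : ℂ) * ((tr3a (A x σ) (A x ν) (B x ρ μ)).trans (tr3a (A x ν) (B x ρ μ) (A x σ)))
      - (2/3 : ℂ) * (tr3a (A x μ) (B x σ ν) (A x ρ))
      + (1/3 : ℂ) * ((tr3a (A x μ) (A x ν) (B x σ ρ)).trans (tr3a (A x ν) (B x σ ρ) (A x μ)))
      + (2/3 : ℂ) * (tr3a (A x μ) (B x σ ρ) (A x ν))
      - (1/3 : ℂ) * ((tr3a (A x μ) (A x ρ) (B x σ ν)).trans (tr3a (A x ρ) (B x σ ν) (A x μ)))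
      + (2/3 : ℂ) * (tr3a (A x ν) (B x σ μ) (A x ρ))
      - (1/3 : ℂ) * ((tr3a (A x ν) (A x μ) (B x σ ρ)).trans (tr3a (A x μ) (B x σ ρ) (A x ν)))
      - (2/3 : ℂ) * (tr3a (A x ν) (B x σ ρ) (A x μ))
      + (1/3 : ℂ) * ((tr3a (A x ν) (A x ρ) (B x σ μ)).trans (tr3a (A x ρ) (B x σ μ) (A x ν)))
      - (2/3 : ℂ) * (tr3a (A x ρ) (B x σ μ) (A x ν))
      + (1/3 : ℂ) * ((tr3a (A x ρ) (A x μ) (B x σ ν)).trans (tr3a (A x μ) (B x σ ν) (A x ρ)))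
      + (2/3 : ℂ) * (tr3a (A x ρ) (B x σ ν) (A x μ))
      - (1/3 : ℂ) * ((tr3a (A x ρ) (A x ν) (B x σ μ)).trans (tr3a (A x ν) (B x σ μ) (A x ρ)))
      + tr4a (A x ν) (A x μ) (A x ρ) (A x σ)
      - tr4a (A x ν) (A x μ) (A x σ) (A x ρ)
      - tr4a (A x ρ) (A x μ) (A x ν) (A x σ)
      + tr4a (A x ρ) (A x μ) (A x σ) (A x ν)
      + tr4a (A x σ) (A x μ) (A x ν) (A x ρ)
      - tr4a (A x σ) (A x μ) (A x ρ) (A x ν)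
      - (tr4a (A x ρ) (A x σ) (A x μ) (A x ν)).trans (tr4a (A x σ) (A x μ) (A x ν) (A x ρ))
      + ((tr4a (A x ρ) (A x σ) (A x ν) (A x μ)).trans (tr4a (A x σ) (A x ν) (A x μ) (A x ρ))).trans (tr4a (A x ν) (A x μ) (A x ρ) (A x σ))
      + (tr4a (A x σ) (A x ρ) (A x μ) (A x ν)).trans (tr4a (A x ρ) (A x μ) (A x ν) (A x σ))
      - ((tr4a (A x σ) (A x ρ) (A x ν) (A x μ)).trans (tr4a (A x ρ) (A x ν) (A x μ) (A x σ))).trans (tr4a (A x ν) (A x μ) (A x σ) (A x ρ))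
      + (tr4a (A x ν) (A x σ) (A x μ) (A x ρ)).trans (tr4a (A x σ) (A x μ) (A x ρ) (A x ν))
      - ((tr4a (A x ν) (A x σ) (A x ρ) (A x μ)).trans (tr4a (A x σ) (A x ρ) (A x μ) (A x ν))).trans (tr4a (A x ρ) (A x μ) (A x ν) (A x σ))
      - (tr4a (A x σ) (A x ν) (A x μ) (A x ρ)).trans (tr4a (A x ν) (A x μ) (A x ρ) (A x σ))
      + ((tr4a (A x σ) (A x ν) (A x ρ) (A x μ)).trans (tr4a (A x ν) (A x ρ) (A x μ) (A x σ))).trans (tr4a (A x ρ) (A x μ) (A x σ) (A x ν))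
      - (tr4a (A x ν) (A x ρ) (A x μ) (A x σ)).trans (tr4a (A x ρ) (A x μ) (A x σ) (A x ν))
      + ((tr4a (A x ν) (A x ρ) (A x σ) (A x μ)).trans (tr4a (A x ρ) (A x σ) (A x μ) (A x ν))).trans (tr4a (A x σ) (A x μ) (A x ν) (A x ρ))
      + (tr4a (A x ρ) (A x ν) (A x μ) (A x σ)).trans (tr4a (A x ν) (A x μ) (A x σ) (A x ρ))
      - ((tr4a (A x ρ) (A x ν) (A x σ) (A x μ)).trans (tr4a (A x ν) (A x σ) (A x μ) (A x ρ))).trans (tr4a (A x σ) (A x μ) (A x ρ) (A x ν))
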